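/- Let Λ be a concave generator with Ǐ(Λ) = Ǐ(e_{a,b}) for relatively prime positive integers a,b. Suppose x(Λ) ≥ a and y(Λ) ≥ b, and that there exists an integer g ≥ 0 with 2(a − x(Λ) + b − y(Λ)) + e(Λ) − 1 ≥ 2g − 1 + e(Λ) + h(Λ). Then g = 0, h(Λ) = 0, x(Λ) = a, y(Λ) = b, Ľ(Λ) = Ľ(e_{a,b}), and Λ = e_{a,b}. -/
import Mathlib


/-- A concave integral path with `e`/`h` edge labels ("concave generator"): the graph of a
piecewise linear convex function from `(0, y(Λ))` to `(x(Λ), 0)` with lattice-point vertices,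
encoded by its vertices `P 0, …, P n`.  `label i = true` means the `i`-th edge is labeled `h`. -/
structure ConcaveGenerator where
  n : ℕ
  npos : 0 < n
  P : Fin (n + 1) → ℤ × ℤ
  label : Fin n → Bool
  startX : (P 0).1 = 0
  endY : (P (Fin.last n)).2 = 0
  y_pos : 0 < (P 0).2
  x_pos : 0 < (P (Fin.last n)).1
  mono : ∀ i : Fin n, (P i.castSucc).1 < (P i.succ).1 ∧ (P i.succ).2 ≤ (P i.castSucc).2
  first_drop : ∀ i : Fin n, (i : ℕ) = 0 → (P i.succ).2 < (P i.castSucc).2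
  slope : ∀ i j : Fin n, i < j →
    ((P j.castSucc).2 - (P j.succ).2) * ((P i.succ).1 - (P i.castSucc).1) <
      ((P i.castSucc).2 - (P i.succ).2) * ((P j.succ).1 - (P j.castSucc).1)

namespace ConcaveGenerator

variable (Λ : ConcaveGenerator)

def x : ℤ := (Λ.P (Fin.last Λ.n)).1
def y : ℤ := (Λ.P 0).2
def run (i : Fin Λ.n) : ℤ := (Λ.P i.succ).1 - (Λ.P i.castSucc).1
def drop (i : Fin Λ.n) : ℤ := (Λ.P i.castSucc).2 - (Λ.P i.succ).2
def perp (i : Fin Λ.n) : ℤ × ℤ := (Λ.run i, Λ.drop i)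
def mult (i : Fin Λ.n) : ℕ := Int.gcd (Λ.run i) (Λ.drop i)
def hCount : ℕ := (Finset.univ.filter fun i => Λ.label i = true).card
def eCount : ℕ := (Finset.univ.filter fun i => Λ.label i = false ∨ 1 < Λ.mult i).card
/-- the lattice points in the region bounded by `Λ` and the axes (including those on `Λ`) -/
def region : Set (ℤ × ℤ) :=
  {q | 0 ≤ q.1 ∧ 0 ≤ q.2 ∧ ∃ i : Fin Λ.n,
    (Λ.P i.castSucc).1 ≤ q.1 ∧ q.1 ≤ (Λ.P i.succ).1 ∧
    Λ.drop i * q.1 + Λ.run i * q.2 ≤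
      Λ.drop i * (Λ.P i.castSucc).1 + Λ.run i * (Λ.P i.castSucc).2}
/-- the lattice points lying on the path `Λ` itself -/
def onPath : Set (ℤ × ℤ) :=
  {q | ∃ i : Fin Λ.n,
    (Λ.P i.castSucc).1 ≤ q.1 ∧ q.1 ≤ (Λ.P i.succ).1 ∧
    Λ.drop i * q.1 + Λ.run i * q.2 =
      Λ.drop i * (Λ.P i.castSucc).1 + Λ.run i * (Λ.P i.castSucc).2}
/-- `Ľ(Λ)`: lattice points in the region bounded by `Λ` and the axes, excluding those on `Λ` -/
noncomputable def Lcheck : ℕ := (Λ.region \ Λ.onPath).ncard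
/-- the combinatorial ECH index `Ǐ(Λ)` -/
noncomputable def Icheck : ℤ := 2 * ((Λ.Lcheck : ℤ) - 1) + (Λ.hCount : ℤ)
/-- the combinatorial index `J̌₀(Λ)` -/
noncomputable def J0check : ℤ := Λ.Icheck - 2 * Λ.x - 2 * Λ.y + (Λ.eCount : ℤ)

end ConcaveGenerator

/-- the concave generator `e_{a,b}`: the single `e`-labeled edge from `(0,b)` to `(a,0)` -/
def eGenC (a b : ℤ) (ha : 0 < a) (hb : 0 < b) : ConcaveGenerator where
  n := 1
  npos := one_pos
  P := fun i => if (i : ℕ) = 0 then ((0 : ℤ), b) else (a, 0)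
  label := fun _ => false
  startX := rfl
  endY := rfl
  y_pos := hb
  x_pos := ha
  mono := by
    intro i
    fin_cases i
    constructor <;> simp <;> omega
  first_drop := by
    intro i _
    fin_cases i
    simp
    omega
  slope := by
    intro i j hij
    fin_cases i <;> fin_cases j <;> simp at hij


namespace ConcaveGenerator

variable (Λ : ConcaveGenerator)

lemma run_pos' (i : Fin Λ.n) : 0 < Λ.run i := by
  have := (Λ.mono i).1; simp only [run]; omega

lemma drop_nonneg' (i : Fin Λ.n) : 0 ≤ Λ.drop i := by
  have := (Λ.mono i).2; simp only [drop]; omega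

lemma edge_endpoint' (i : Fin Λ.n) :
    Λ.drop i * (Λ.P i.succ).1 + Λ.run i * (Λ.P i.succ).2 =
      Λ.drop i * (Λ.P i.castSucc).1 + Λ.run i * (Λ.P i.castSucc).2 := by
  simp only [run, drop]; ring

lemma x_strictMono' : StrictMono fun k : Fin (Λ.n + 1) => (Λ.P k).1 := by
  rw [Fin.strictMono_iff_lt_succ]; exact fun i => (Λ.mono i).1

lemma y_antitone' : Antitone fun k : Fin (Λ.n + 1) => (Λ.P k).2 := by
  rw [Fin.antitone_iff_succ_le]; exact fun i => (Λ.mono i).2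

lemma y_nonneg' (k : Fin (Λ.n + 1)) : 0 ≤ (Λ.P k).2 := by
  have := Λ.y_antitone' (Fin.le_last k)
  simpa [Λ.endY] using this

lemma x_nonneg' (k : Fin (Λ.n + 1)) : 0 ≤ (Λ.P k).1 := by
  have := Λ.x_strictMono'.monotone (Fin.zero_le k)
  simpa [Λ.startX] using this

/-- the linear functional `b*X + a*Y` along vertices, extended constantly beyond `n` -/
def Fv (a b : ℤ) (k : ℕ) : ℤ :=
  b * (Λ.P ⟨min k Λ.n, by omega⟩).1 + a * (Λ.P ⟨min k Λ.n, by omega⟩).2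

lemma Fv_eq (a b : ℤ) (k : Fin (Λ.n + 1)) :
    Λ.Fv a b (k : ℕ) = b * (Λ.P k).1 + a * (Λ.P k).2 := by
  have hk : min (k : ℕ) Λ.n = (k : ℕ) := min_eq_left (Nat.lt_succ_iff.mp k.isLt)
  have h : (⟨min (k : ℕ) Λ.n, by omega⟩ : Fin (Λ.n + 1)) = k := by
    apply Fin.ext; simpa using hk
  unfold Fv; rw [h]

lemma Fv_succ (a b : ℤ) (k : ℕ) (hk : k < Λ.n) :
    Λ.Fv a b (k + 1) - Λ.Fv a b k = b * Λ.run ⟨k, hk⟩ - a * Λ.drop ⟨k, hk⟩ := by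
  have h1 : (⟨min (k+1) Λ.n, by omega⟩ : Fin (Λ.n + 1)) = Fin.succ ⟨k, hk⟩ := by
    apply Fin.ext; simp [Fin.val_succ]; omega
  have h2 : (⟨min k Λ.n, by omega⟩ : Fin (Λ.n + 1)) = Fin.castSucc ⟨k, hk⟩ := by
    apply Fin.ext; simp [Fin.coe_castSucc]; omega
  unfold Fv
  rw [h1, h2]
  simp only [run, drop]; ring

lemma Fv_zero (a b : ℤ) : Λ.Fv a b 0 = a * (Λ.P 0).2 := by
  have h : (⟨min 0 Λ.n, by omega⟩ : Fin (Λ.n + 1)) = 0 := by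
    apply Fin.ext; simp
  unfold Fv; rw [h, Λ.startX]; ring

lemma Fv_top (a b : ℤ) (m : ℕ) (hm : Λ.n ≤ m) : Λ.Fv a b m = b * (Λ.P (Fin.last Λ.n)).1 := by
  have h : (⟨min m Λ.n, by omega⟩ : Fin (Λ.n + 1)) = Fin.last Λ.n := by
    apply Fin.ext; simp [Fin.val_last]; omega
  unfold Fv; rw [h, Λ.endY]; ring

lemma vertex_bound (a b : ℤ) (ha : 0 < a)
    (hx : (Λ.P (Fin.last Λ.n)).1 = a) (hy : (Λ.P 0).2 = b) (k : Fin (Λ.n + 1)) :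
    b * (Λ.P k).1 + a * (Λ.P k).2 ≤ a * b := by
  by_contra hcon
  push_neg at hcon
  set F := Λ.Fv a b with hF
  have hF0 : F 0 = a * b := by rw [hF, Λ.Fv_zero, hy]
  have hFtop : ∀ m, Λ.n ≤ m → F m = a * b := fun m hm => by
    rw [hF, Λ.Fv_top a b m hm, hx]; ring
  have hFk : a * b < F (k : ℕ) := by rw [hF, Λ.Fv_eq]; exact hcon
  have hk1 : 0 < (k : ℕ) := by
    rcases Nat.eq_zero_or_pos (k : ℕ) with h | h
    · rw [h, hF0] at hFk; omega
    · exact h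
  have hkn : (k : ℕ) < Λ.n := by
    rcases lt_or_ge (k : ℕ) Λ.n with h | h
    · exact h
    · rw [hFtop _ h] at hFk; omega
  set g : ℕ → ℤ := fun i => F (i + 1) - F i with hgdef
  have htel : ∀ m, ∑ i ∈ Finset.range m, g i = F m - F 0 := fun m =>
    Finset.sum_range_sub F m
  have hsum : ∑ i ∈ Finset.Ico (k : ℕ) Λ.n, g i < 0 := by
    rw [Finset.sum_Ico_eq_sub _ (le_of_lt hkn), htel, htel, hFtop Λ.n le_rfl]
    omega
  obtain ⟨j, hjmem, hj⟩ : ∃ j ∈ Finset.Ico (k : ℕ) Λ.n, g j < 0 := by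
    by_contra hall
    push_neg at hall
    have := Finset.sum_nonneg hall
    omega
  rw [Finset.mem_Ico] at hjmem
  have hgj : g j = b * Λ.run ⟨j, hjmem.2⟩ - a * Λ.drop ⟨j, hjmem.2⟩ :=
    Λ.Fv_succ a b j hjmem.2
  have hneg : ∀ i, i < (k : ℕ) → g i < 0 := by
    intro i hi
    have hin : i < Λ.n := lt_trans (lt_of_lt_of_le hi hjmem.1) hjmem.2
    have hij : (⟨i, hin⟩ : Fin Λ.n) < ⟨j, hjmem.2⟩ := by
      simp [Fin.mk_lt_mk]; omega
    have hs := Λ.slope ⟨i, hin⟩ ⟨j, hjmem.2⟩ hij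
    have hs' : Λ.drop ⟨j, hjmem.2⟩ * Λ.run ⟨i, hin⟩ <
        Λ.drop ⟨i, hin⟩ * Λ.run ⟨j, hjmem.2⟩ := hs
    have hgi : g i = b * Λ.run ⟨i, hin⟩ - a * Λ.drop ⟨i, hin⟩ := Λ.Fv_succ a b i hin
    have hri := Λ.run_pos' ⟨i, hin⟩
    have hrj := Λ.run_pos' ⟨j, hjmem.2⟩
    have hdi := Λ.drop_nonneg' ⟨i, hin⟩
    have hdj := Λ.drop_nonneg' ⟨j, hjmem.2⟩
    rw [hgi]
    rw [hgj] at hj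
    nlinarith [hs', hj, hri, hrj, hdi, hdj, mul_pos hri hrj]
  have : ∑ i ∈ Finset.range (k : ℕ), g i < 0 := by
    apply Finset.sum_neg
    · intro i hi; exact hneg i (Finset.mem_range.mp hi)
    · exact ⟨0, Finset.mem_range.mpr hk1⟩
  rw [htel] at this
  omega

lemma diff_subset (a b : ℤ) (ha : 0 < a)
    (hx : (Λ.P (Fin.last Λ.n)).1 = a) (hy : (Λ.P 0).2 = b) :
    Λ.region \ Λ.onPath ⊆ {q : ℤ × ℤ | 0 ≤ q.1 ∧ 0 ≤ q.2 ∧ b * q.1 + a * q.2 < a * b} := by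
  rintro ⟨q1, q2⟩ ⟨⟨hq1, hq2, i, hX1, hX2, hle⟩, hnot⟩
  refine ⟨hq1, hq2, ?_⟩
  have hstrict : Λ.drop i * q1 + Λ.run i * q2 <
      Λ.drop i * (Λ.P i.castSucc).1 + Λ.run i * (Λ.P i.castSucc).2 := by
    rcases lt_or_eq_of_le hle with h | h
    · exact h
    · exact absurd ⟨i, hX1, hX2, h⟩ hnot
  have hv1 := Λ.vertex_bound a b ha hx hy i.castSucc
  have hv2 := Λ.vertex_bound a b ha hx hy i.succ
  have hr := Λ.run_pos' i
  have hd := Λ.drop_nonneg' i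
  simp only [run, drop] at hstrict hr hd
  set X := (Λ.P i.castSucc).1
  set Y := (Λ.P i.castSucc).2
  set X' := (Λ.P i.succ).1
  set Y' := (Λ.P i.succ).2
  have hT1 : 0 ≤ (X' - q1) * (a * b - b * X - a * Y) := by
    apply mul_nonneg <;> linarith
  have hT2 : 0 ≤ (q1 - X) * (a * b - b * X' - a * Y') := by
    apply mul_nonneg <;> linarith
  have hA : 0 < a * ((Y - Y') * X + (X' - X) * Y - (Y - Y') * q1 - (X' - X) * q2) := by
    apply mul_pos ha; linarith
  have hkey : (X' - X) * (b * q1 + a * q2) < (X' - X) * (a * b) := by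
    nlinarith [hT1, hT2, hA]
  exact lt_of_mul_lt_mul_left hkey (by linarith)

lemma vertex_onPath (k : Fin (Λ.n + 1)) : Λ.P k ∈ Λ.onPath := by
  rcases lt_or_ge (k : ℕ) Λ.n with h | h
  · have hc : Fin.castSucc (⟨(k : ℕ), h⟩ : Fin Λ.n) = k := by apply Fin.ext; simp
    have hPc : Λ.P k = Λ.P (Fin.castSucc (⟨(k : ℕ), h⟩ : Fin Λ.n)) := by rw [hc]
    refine ⟨⟨(k : ℕ), h⟩, ?_, ?_, ?_⟩
    · rw [hc]
    · rw [hPc]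
      exact le_of_lt (Λ.mono _).1
    · rw [hc]
  · have hn := Λ.npos
    have hkn : (k : ℕ) = Λ.n := by omega
    have hklast : k = Fin.last Λ.n := by apply Fin.ext; simpa using hkn
    set i : Fin Λ.n := ⟨Λ.n - 1, Nat.sub_lt hn one_pos⟩ with hi
    have hsucc : Fin.succ i = Fin.last Λ.n := by
      apply Fin.ext; simp [hi, Fin.val_succ, Fin.val_last]; omega
    have hP : Λ.P k = Λ.P (Fin.succ i) := congrArg Λ.P (hklast.trans hsucc.symm)
    refine ⟨i, ?_, ?_, ?_⟩
    · rw [hP]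
      exact le_of_lt (Λ.mono _).1
    · rw [hP]
    · rw [hP]
      exact Λ.edge_endpoint' _

end ConcaveGenerator

/-- a concave generator `Λ` with `Ǐ(Λ) = Ǐ(e_{a,b})`, `x(Λ) ≥ a`, `y(Λ) ≥ b`,
admitting an integer `g ≥ 0` with `2(a − x(Λ) + b − y(Λ)) + e(Λ) − 1 ≥ 2g − 1 + e(Λ) + h(Λ)`,
must satisfy `g = 0`, `h(Λ) = 0`, `x(Λ) = a`, `y(Λ) = b`, `Ľ(Λ) = Ľ(e_{a,b})`, and
`Λ = e_{a,b}`. -/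
theorem eq_eGenC_of_index_constraints (a b : ℤ) (ha : 0 < a) (hb : 0 < b)
    (hab : Int.gcd a b = 1) (Λ : ConcaveGenerator)
    (hI : Λ.Icheck = (eGenC a b ha hb).Icheck)
    (hx : a ≤ Λ.x) (hy : b ≤ Λ.y)
    (g : ℤ) (hg : 0 ≤ g)
    (hineq : 2 * g - 1 + (Λ.eCount : ℤ) + (Λ.hCount : ℤ) ≤
      2 * (a - Λ.x + b - Λ.y) + (Λ.eCount : ℤ) - 1) :
    g = 0 ∧ Λ.hCount = 0 ∧ Λ.x = a ∧ Λ.y = b ∧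
      Λ.Lcheck = (eGenC a b ha hb).Lcheck ∧ Λ = eGenC a b ha hb := by
  have hhn : (0 : ℤ) ≤ (Λ.hCount : ℤ) := Int.natCast_nonneg _
  have hg0 : g = 0 := le_antisymm (by linarith) hg
  have hxa : Λ.x = a := le_antisymm (by linarith) hx
  have hya : Λ.y = b := le_antisymm (by linarith) hy
  have hh0 : Λ.hCount = 0 := by
    have h1 : (Λ.hCount : ℤ) = 0 := le_antisymm (by linarith) hhn
    exact_mod_cast h1
  have hXA : (Λ.P (Fin.last Λ.n)).1 = a := hxa
  have hYB : (Λ.P 0).2 = b := hya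
  -- the open triangle under the segment from (0,b) to (a,0)
  set T : Set (ℤ × ℤ) := {q | 0 ≤ q.1 ∧ 0 ≤ q.2 ∧ b * q.1 + a * q.2 < a * b} with hT
  have hTe : (eGenC a b ha hb).region \ (eGenC a b ha hb).onPath = T := by
    ext ⟨q1, q2⟩
    simp only [ConcaveGenerator.region, ConcaveGenerator.onPath, ConcaveGenerator.run,
      ConcaveGenerator.drop, eGenC, Set.mem_diff, Set.mem_setOf_eq, Fin.exists_fin_one, hT]
    norm_num
    constructor
    · rintro ⟨⟨h1, h2, _, h4, h5⟩, h6⟩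
      exact ⟨h1, h2, lt_of_le_of_ne h5 (h6 h1 h4)⟩
    · rintro ⟨h1, h2, h3⟩
      have hq1a : q1 ≤ a := by nlinarith
      exact ⟨⟨h1, h2, h1, hq1a, le_of_lt h3⟩, fun _ _ h => absurd h (ne_of_lt h3)⟩
  have hTfin : T.Finite := by
    apply Set.Finite.subset (Set.finite_Icc ((0 : ℤ), (0 : ℤ)) (a, b))
    rintro ⟨q1, q2⟩ ⟨h1, h2, h3⟩
    simp only [Set.mem_Icc, Prod.mk_le_mk]
    refine ⟨⟨h1, h2⟩, ?_, ?_⟩ <;> nlinarith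
  have hhe : (eGenC a b ha hb).hCount = 0 := by
    simp [ConcaveGenerator.hCount, eGenC]
  have hL : Λ.Lcheck = (eGenC a b ha hb).Lcheck := by
    have h2 := hI
    simp only [ConcaveGenerator.Icheck, hh0, hhe, Nat.cast_zero] at h2
    omega
  have hLe : (eGenC a b ha hb).Lcheck = T.ncard := by
    rw [ConcaveGenerator.Lcheck, hTe]
  have hScard : T.ncard ≤ (Λ.region \ Λ.onPath).ncard := by
    rw [← ConcaveGenerator.Lcheck, hL, hLe]
  have hSeq : Λ.region \ Λ.onPath = T :=
    Set.eq_of_subset_of_ncard_le (Λ.diff_subset a b ha hXA hYB) hScard hTfin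
  have hvert : ∀ k : Fin (Λ.n + 1), b * (Λ.P k).1 + a * (Λ.P k).2 = a * b := by
    intro k
    refine le_antisymm (Λ.vertex_bound a b ha hXA hYB k) ?_
    by_contra hlt
    push_neg at hlt
    have hmem : Λ.P k ∈ T := ⟨Λ.x_nonneg' k, Λ.y_nonneg' k, hlt⟩
    rw [← hSeq] at hmem
    exact hmem.2 (Λ.vertex_onPath k)
  have hn1 : Λ.n = 1 := by
    by_contra hne
    have hn2 : 2 ≤ Λ.n := by have := Λ.npos; omega
    set k : Fin (Λ.n + 1) := ⟨1, by omega⟩ with hk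
    have h0k : (0 : Fin (Λ.n + 1)) < k := by
      simp [Fin.lt_def, hk]
    have hkl : k < Fin.last Λ.n := by
      simp [Fin.lt_def, hk, Fin.val_last]; omega
    have h1 : 0 < (Λ.P k).1 := by
      have := Λ.x_strictMono' h0k
      simpa [Λ.startX] using this
    have h2 : (Λ.P k).1 < a := by
      have := Λ.x_strictMono' hkl
      simpa [hXA] using this
    have hdvd : a ∣ b * (Λ.P k).1 := ⟨b - (Λ.P k).2, by linarith [hvert k]⟩
    have hcop : IsCoprime a b := Int.isCoprime_iff_gcd_eq_one.mpr hab
    have hdvd2 : a ∣ (Λ.P k).1 := hcop.dvd_of_dvd_mul_right (by rwa [mul_comm] at hdvd)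
    have := Int.le_of_dvd h1 hdvd2
    omega
  have hP0 : Λ.P 0 = ((0 : ℤ), b) := Prod.ext Λ.startX hYB
  have hPlast : Λ.P (Fin.last Λ.n) = (a, (0 : ℤ)) := Prod.ext hXA Λ.endY
  have hlab : ∀ i, Λ.label i = false := by
    intro i
    by_contra hbad
    have hmem : i ∈ Finset.univ.filter (fun i => Λ.label i = true) := by
      simp only [Finset.mem_filter, Finset.mem_univ, true_and]
      revert hbad
      cases Λ.label i <;> simp
    have : (Finset.univ.filter (fun i => Λ.label i = true)).card ≠ 0 :=
      Finset.card_ne_zero_of_mem hmem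
    exact this hh0
  refine ⟨hg0, hh0, hxa, hya, hL, ?_⟩
  clear hI hineq hhn hxa hya hh0 hXA hYB hTe hTfin hhe hL hLe hScard hSeq hvert hx hy
  obtain ⟨n, npos, P, label, hs, hey, hyp, hxp, hm, hf, hsl⟩ := Λ
  simp only at hn1 hP0 hPlast hlab
  subst hn1
  have hPeq : P = fun i : Fin 2 => if (i : ℕ) = 0 then ((0 : ℤ), b) else (a, 0) := by
    funext i
    fin_cases i
    · simpa using hP0
    · simpa using hPlast
  have hlabeq : label = fun _ => false := funext hlab
  subst hPeq hlabeq
  rfl
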